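/- With ψ_k defined as above, for all k ≥ 3 and all m > 0, ψ_k(m-1) < ψ_k(m) as ordinals. -/

import Mathlib

/-- The parametrized Ackermann function: `A a k b` is `A_a(k,b)`. -/
def A : ℕ → ℕ → ℕ → ℕ
  | 0, _, b => b + 1
  | a+1, k, 0 => (fun x => A a k x)^[k] 0
  | a+1, k, b+1 => (fun x => A a k x)^[k] (A (a+1) k b)
  termination_by a _ b => (a, b)

/-- `m = A_a(k,b) + l` is the `k`-normal form of `m`: `a` is maximal with
`A_a(k,0) ≤ m` and `b` is maximal with `A_a(k,b) ≤ m`. -/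
def IsNF (k m a b l : ℕ) : Prop :=
  m = A a k b + l ∧ A a k 0 ≤ m ∧
  (∀ a', A a' k 0 ≤ m → a' ≤ a) ∧
  (∀ b', A a k b' ≤ m → b' ≤ b)

/-- The graph of the hereditary base change operation `m ↦ m[k←k+1]`. -/
inductive BC (k : ℕ) : ℕ → ℕ → Prop
  | zero : BC k 0 0
  | step {a b l a' b'} :
      IsNF k (A a k b + l) a b l → BC k a a' → BC k b b' →
      BC k (A a k b + l) (A a' (k+1) b' + l)

open Ordinal in
/-- `-c + o`: truncated subtraction on finite ordinals, identity on infinite ones. -/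
noncomputable def msub (c : ℕ) (o : Ordinal) : Ordinal :=
  if o < Ordinal.omega0 then o - c else o

open Ordinal in
/-- The graph of the map `ψ_k` assigning ordinals below `ε₀` to natural numbers,
defined via `k`-normal forms. -/
inductive Psi (k : ℕ) : ℕ → Ordinal → Prop
  | zero : Psi k 0 0
  | base {b l : ℕ} : IsNF k (A 0 k b + l) 0 b l →
      Psi k (A 0 k b + l) ((b : Ordinal) + 1)
  | one {b l : ℕ} {ob : Ordinal} : IsNF k (A 1 k b + l) 1 b l → Psi k b ob →
      Psi k (A 1 k b + l) (omega0 * (1 + ob) + (l : Ordinal))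
  | ge {a b l : ℕ} {oa ob : Ordinal} : 2 ≤ a → IsNF k (A a k b + l) a b l →
      Psi k a oa → Psi k b ob →
      Psi k (A a k b + l) (omega0 ^ (omega0 + msub 2 oa) + omega0 * ob + (l : Ordinal))

/-!
Compare `ψ_k(n)` with `ψ_k(n+1)` by strong induction on `n`, through the normal form
`A_a(k,b) + l` of `n + 1`. Below `k` the map `ψ_k` is the identity, so let `a ≥ 1`. If `l > 0`,
the normal form of `n` only lowers `l`. If `l = 0 < b`, the normal form of `n` is
`A_a(k,b-1) + l'`, and the finite `l'` is absorbed: `ω·ψ_k(b-1) + l' < ω·ψ_k(b)`. If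
`n + 1 = A_a(k,0)`, then by induction on `m` every `m ≤ n` has
`ψ_k(m) < ω^(ω + (-2 + ψ_k(a)))`: its level `a'` is below `a`, and as `ψ_k` is strictly
increasing up to `a`, `a' ≤ ψ_k(a') < ψ_k(a)`, so `-2 + ·` is strictly larger at `ψ_k(a)`
than at `ψ_k(a')` when `a' ≥ 2`.
-/

theorem lt_iterate_self {α : Type*} [Preorder α] {f : α → α} (hf : ∀ x, x < f x) {j : ℕ}
    (hj : j ≠ 0) (x : α) : x < f^[j] x := by
  obtain ⟨j, rfl⟩ := Nat.exists_eq_succ_of_ne_zero hj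
  rw [Function.iterate_succ_apply]
  exact (hf x).trans_le (Function.id_le_iterate_of_id_le (fun y ↦ (hf y).le) j (f x))

section Ackermann

variable {k : ℕ}

theorem A_zero (k b : ℕ) : A 0 k b = b + 1 := by
  simp [A]

theorem A_succ_zero (a k : ℕ) : A (a + 1) k 0 = (A a k)^[k] 0 := by
  rw [A]

theorem A_succ_succ (a k b : ℕ) : A (a + 1) k (b + 1) = (A a k)^[k] (A (a + 1) k b) := by
  rw [A]

theorem A_one_zero (k : ℕ) : A 1 k 0 = k := by
  have (j x : ℕ) : (A 0 k)^[j] x = x + j := by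
    induction j with
    | zero => rfl
    | succ j ih => rw [Function.iterate_succ_apply', ih, A_zero, add_assoc]
  rw [A_succ_zero, this, zero_add]

theorem lt_A (hk : k ≠ 0) (a b : ℕ) : b < A a k b := by
  induction a generalizing b with
  | zero => simp [A_zero]
  | succ a iha =>
    induction b with
    | zero => rw [A_succ_zero]; exact lt_iterate_self iha hk 0
    | succ b ihb =>
      rw [A_succ_succ]
      exact (Nat.succ_le_of_lt ihb).trans_lt (lt_iterate_self iha hk _)

theorem A_pos (hk : k ≠ 0) (a b : ℕ) : 0 < A a k b :=
  b.zero_le.trans_lt (lt_A hk a b)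

theorem A_strictMono (hk : k ≠ 0) (a : ℕ) : StrictMono (A a k) := by
  refine strictMono_nat_of_lt_succ fun b ↦ ?_
  cases a with
  | zero => simp [A_zero]
  | succ a => rw [A_succ_succ]; exact lt_iterate_self (lt_A hk a) hk _

theorem A_zero_right_strictMono (hk : 2 ≤ k) : StrictMono fun a ↦ A a k 0 := by
  refine strictMono_nat_of_lt_succ fun a ↦ ?_
  obtain ⟨j, rfl⟩ : ∃ j, k = j + 1 := ⟨k - 1, by omega⟩
  rw [A_succ_zero, Function.iterate_succ_apply]
  exact lt_iterate_self (lt_A (by omega) a) (by omega) _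

theorem lt_A_zero_right (hk : 2 ≤ k) (a : ℕ) : a < A a k 0 := by
  induction a with
  | zero => simp [A_zero]
  | succ a ih =>
    exact (Nat.succ_le_of_lt ih).trans_lt (A_zero_right_strictMono hk a.lt_succ_self)

end Ackermann

namespace IsNF

variable {k m a b l : ℕ}

theorem unique {a' b' l' : ℕ} (h : IsNF k m a b l) (h' : IsNF k m a' b' l') :
    a = a' ∧ b = b' ∧ l = l' := by
  obtain ⟨hm, hA, ha, hb⟩ := h
  obtain ⟨hm', hA', ha', hb'⟩ := h'
  obtain rfl : a = a' := le_antisymm (ha' a hA) (ha a' hA')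
  obtain rfl : b = b' := le_antisymm (hb' b (by omega)) (hb b' (by omega))
  exact ⟨rfl, rfl, by omega⟩

theorem level_lt (hk : 2 ≤ k) (h : IsNF k m a b l) : a < m :=
  (lt_A_zero_right hk a).trans_le h.2.1

theorem arg_lt (hk : k ≠ 0) (h : IsNF k m a b l) : b < m :=
  (lt_A hk a b).trans_le (by rw [h.1]; exact Nat.le_add_right _ _)

theorem one_le_level (h : IsNF k m a b l) (hkm : k ≤ m) : 1 ≤ a :=
  h.2.2.1 1 (by rwa [A_one_zero])

theorem pred (hk : k ≠ 0) (h : IsNF k (m + 1) a b (l + 1)) : IsNF k m a b l := by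
  obtain ⟨hm, -, ha, hb⟩ := h
  have := (A_strictMono hk a).monotone b.zero_le
  exact ⟨by omega, by omega, fun a' h' ↦ ha a' (by omega), fun b' h' ↦ hb b' (by omega)⟩

theorem pred_of_remainder_zero (hk : k ≠ 0) (h : IsNF k (m + 1) a (b + 1) 0) :
    IsNF k m a b (m - A a k b) := by
  obtain ⟨hm, -, ha, -⟩ := h
  have hmono := A_strictMono hk a
  have hb : A a k b < A a k (b + 1) := hmono b.lt_succ_self
  refine ⟨by omega, ?_, fun a' h' ↦ ha a' (by omega), fun b' h' ↦ ?_⟩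
  · exact (hmono.monotone b.zero_le).trans (by omega)
  · exact Nat.lt_succ_iff.1 (hmono.lt_iff_lt.1 (show A a k b' < A a k (b + 1) by omega))

end IsNF

theorem exists_isNF {k m : ℕ} (hk : 2 ≤ k) (hm : 0 < m) : ∃ a b l, IsNF k m a b l := by
  have hA0 : A 0 k 0 ≤ m := by rw [A_zero]; omega
  set a := Nat.findGreatest (fun a ↦ A a k 0 ≤ m) m
  have hAa : A a k 0 ≤ m := Nat.findGreatest_spec (P := fun a ↦ A a k 0 ≤ m) m.zero_le hA0
  set b := Nat.findGreatest (fun b ↦ A a k b ≤ m) m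
  have hAb : A a k b ≤ m := Nat.findGreatest_spec (P := fun b ↦ A a k b ≤ m) m.zero_le hAa
  refine ⟨a, b, m - A a k b, by omega, hAa, fun a' h' ↦ ?_, fun b' h' ↦ ?_⟩
  · exact Nat.le_findGreatest ((lt_A_zero_right hk a').trans_le h').le h'
  · exact Nat.le_findGreatest ((lt_A (by omega) a b').trans_le h').le h'

theorem isNF_succ_of_succ_lt {k m : ℕ} (hm : m + 1 < k) : IsNF k (m + 1) 0 m 0 := by
  refine ⟨by rw [A_zero], by rw [A_zero]; omega, fun a' h' ↦ ?_, fun b' h' ↦ ?_⟩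
  · by_contra! ha'
    have : A 1 k 0 ≤ A a' k 0 := (A_zero_right_strictMono (by omega)).monotone ha'
    rw [A_one_zero] at this
    omega
  · rw [A_zero] at h'; omega

open Ordinal

namespace Psi

variable {k m : ℕ} {o : Ordinal}

theorem eq_zero_of_eq_zero (hk : k ≠ 0) (h : Psi k m o) (hm : m = 0) : o = 0 := by
  cases h with
  | zero => rfl
  | base _ | one _ _ | ge _ _ _ _ =>
    exact absurd hm ((A_pos hk _ _).trans_le (Nat.le_add_right _ _)).ne'

theorem cases_of_isNF (hk : k ≠ 0) {a b l : ℕ} (h : Psi k m o) (hnf : IsNF k m a b l) :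
    (a = 0 ∧ o = (b : Ordinal) + 1) ∨
    (a = 1 ∧ ∃ ob, Psi k b ob ∧ o = ω * (1 + ob) + l) ∨
    (2 ≤ a ∧ ∃ oa ob, Psi k a oa ∧ Psi k b ob ∧
      o = ω ^ (ω + msub 2 oa) + ω * ob + l) := by
  cases h with
  | zero => have := hnf.1; have := A_pos hk a b; omega
  | base hnf' =>
    obtain ⟨rfl, rfl, rfl⟩ := hnf'.unique hnf
    exact .inl ⟨rfl, rfl⟩
  | one hnf' hb =>
    obtain ⟨rfl, rfl, rfl⟩ := hnf'.unique hnf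
    exact .inr (.inl ⟨rfl, _, hb, rfl⟩)
  | ge ha hnf' hoa hob =>
    obtain ⟨rfl, rfl, rfl⟩ := hnf'.unique hnf
    exact .inr (.inr ⟨ha, _, _, hoa, hob, rfl⟩)

theorem unique (hk : k ≠ 0) {o₁ o₂ : Ordinal} (h₁ : Psi k m o₁) (h₂ : Psi k m o₂) :
    o₁ = o₂ := by
  induction h₁ generalizing o₂ with
  | zero => exact (h₂.eq_zero_of_eq_zero hk rfl).symm
  | base hnf =>
    rcases h₂.cases_of_isNF hk hnf with ⟨-, rfl⟩ | ⟨h, -⟩ | ⟨h, -⟩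
    · rfl
    · omega
    · omega
  | one hnf _ ihb =>
    rcases h₂.cases_of_isNF hk hnf with ⟨h, -⟩ | ⟨-, ob, hob, rfl⟩ | ⟨h, -⟩
    · omega
    · rw [ihb hob]
    · omega
  | ge ha hnf _ _ iha ihb =>
    rcases h₂.cases_of_isNF hk hnf with ⟨h, -⟩ | ⟨h, -⟩ | ⟨-, oa, ob, hoa, hob, rfl⟩
    · omega
    · omega
    · rw [iha hoa, ihb hob]

end Psi

theorem exists_Psi {k : ℕ} (hk : 2 ≤ k) (m : ℕ) : ∃ o, Psi k m o := by
  induction m using Nat.strong_induction_on with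
  | _ m ih =>
  rcases Nat.eq_zero_or_pos m with rfl | hm
  · exact ⟨0, .zero⟩
  obtain ⟨a, b, l, hnf⟩ := exists_isNF hk hm
  obtain ⟨ob, hob⟩ := ih b (hnf.arg_lt (by omega))
  obtain ⟨oa, hoa⟩ := ih a (hnf.level_lt hk)
  obtain rfl := hnf.1
  match a, hnf, hoa with
  | 0, hnf, _ => exact ⟨_, .base hnf⟩
  | 1, hnf, _ => exact ⟨_, .one hnf hob⟩
  | a + 2, hnf, hoa => exact ⟨_, .ge (by omega) hnf hoa hob⟩

/-- `ψ_k` as a function; its value is junk where `Psi k m` is empty, which happens only for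
`k < 2`. -/
noncomputable def psi (k m : ℕ) : Ordinal :=
  Classical.epsilon (Psi k m)

theorem Psi.psi_eq {k m : ℕ} {o : Ordinal} (hk : k ≠ 0) (h : Psi k m o) : psi k m = o :=
  (Classical.epsilon_spec ⟨o, h⟩ : Psi k m (psi k m)).unique hk h

theorem psi_spec {k : ℕ} (hk : 2 ≤ k) (m : ℕ) : Psi k m (psi k m) :=
  Classical.epsilon_spec (exists_Psi hk m)

theorem psi_zero {k : ℕ} (hk : k ≠ 0) : psi k 0 = 0 :=
  Psi.zero.psi_eq hk

theorem psi_of_lt {k m : ℕ} (hm : m < k) : psi k m = m := by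
  rcases m with _ | m
  · exact_mod_cast psi_zero (by omega)
  · have h : Psi k (A 0 k m + 0) (m + 1) :=
      .base (by rw [A_zero, add_zero]; exact isNF_succ_of_succ_lt hm)
    rw [A_zero, add_zero] at h
    rw [h.psi_eq (by omega), Nat.cast_succ]

/-- Reading `ω * (1 + x)` as `ω + ω * x`, the levels `a = 1` and `a ≥ 2` share the shape
`psiHead k a + ω * ψ_k(b) + l`. -/
noncomputable def psiHead (k a : ℕ) : Ordinal :=
  if a = 1 then ω else ω ^ (ω + msub 2 (psi k a))

theorem psi_of_isNF {k m a b l : ℕ} (hk : 2 ≤ k) (ha : 1 ≤ a) (hnf : IsNF k m a b l) :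
    psi k m = psiHead k a + ω * psi k b + l := by
  obtain rfl := hnf.1
  rcases (by omega : a = 1 ∨ 2 ≤ a) with rfl | ha
  · rw [(Psi.one hnf (psi_spec hk b)).psi_eq (by omega), psiHead, if_pos rfl, mul_add, mul_one]
  · rw [(Psi.ge ha hnf (psi_spec hk a) (psi_spec hk b)).psi_eq (by omega), psiHead,
      if_neg (by omega)]

theorem msub_lt_msub {c : ℕ} {x y : Ordinal} (hcx : (c : Ordinal) ≤ x) (hxy : x < y) :
    msub c x < msub c y := by
  unfold msub
  split_ifs with hx hy hy
  · rwa [Ordinal.sub_lt_of_le hcx, Ordinal.add_sub_cancel_of_le (hcx.trans hxy.le)]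
  · exact ((Ordinal.sub_le_self x c).trans_lt hx).trans_le (not_lt.1 hy)
  · exact absurd (hxy.trans hy) hx
  · exact hxy

theorem omega0_mul_add_lt {x y : Ordinal} (hxy : x < y) (l : ℕ) : ω * x + l < ω * y :=
  calc ω * x + l < ω * x + ω := add_lt_add_right (natCast_lt_omega0 l) _
    _ = ω * (x + 1) := by rw [mul_add, mul_one]
    _ ≤ ω * y := mul_le_mul_right (Order.add_one_le_of_lt hxy) _

theorem omega0_mul_lt_omega0_opow {e x : Ordinal} (he : ω ≤ e) (hx : x < ω ^ e) :
    ω * x < ω ^ e :=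
  calc ω * x < ω * ω ^ e := mul_lt_mul_of_pos_left hx omega0_pos
    _ = ω ^ e := by rw [← opow_one_add, one_add_of_omega0_le he]

theorem natCast_le_of_strictMonoOn_Iic {f : ℕ → Ordinal} {n : ℕ}
    (hf : StrictMonoOn f (Set.Iic n)) : (n : Ordinal) ≤ f n := by
  induction n with
  | zero => exact zero_le
  | succ n ih =>
    have hlt : f n < f (n + 1) :=
      hf (Set.mem_Iic.2 n.le_succ) (Set.mem_Iic.2 le_rfl) n.lt_succ_self
    rw [Nat.cast_succ]
    exact Order.add_one_le_of_lt ((ih (hf.mono (Set.Iic_subset_Iic.2 n.le_succ))).trans_lt hlt)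

section Monotonicity

universe u

variable {k : ℕ}

theorem psi_lt_of_lt_A_zero (hk : 2 ≤ k) {a : ℕ}
    (hmono : StrictMonoOn (psi.{u} k) (Set.Iic a)) {n : ℕ} (hn : n < A a k 0) :
    psi.{u} k n < ω ^ (ω + msub 2 (psi k a)) := by
  set e := ω + msub 2 (psi k a)
  have he : ω ≤ e := le_self_add
  have hω : ω ≤ ω ^ e := left_le_opow _ (omega0_pos.trans_le he)
  have hadd := isPrincipal_add_omega0_opow e
  induction n using Nat.strong_induction_on with
  | _ n ih =>
  rcases lt_or_ge n k with hnk | hkn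
  · rw [psi_of_lt hnk]; exact (natCast_lt_omega0 n).trans_le hω
  obtain ⟨a', b, l, hnf⟩ := exists_isNF hk (show 0 < n by omega)
  have ha' : a' < a := (A_zero_right_strictMono hk).lt_iff_lt.1 (hnf.2.1.trans_lt hn)
  have hb := ih b (hnf.arg_lt (by omega)) ((hnf.arg_lt (by omega)).trans hn)
  have ha'pos := hnf.one_le_level hkn
  have hhead : psiHead k a' < ω ^ e := by
    rw [psiHead]
    split_ifs with ha'_eq
    · calc ω = ω ^ 1 := (opow_one ω).symm
        _ < ω ^ e := (opow_lt_opow_iff_right one_lt_omega0).2 (one_lt_omega0.trans_le he)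
    · have h2 := (Nat.cast_le.2 (by omega : 2 ≤ a')).trans
          (natCast_le_of_strictMonoOn_Iic (hmono.mono (Set.Iic_subset_Iic.2 ha'.le)))
      have hψ : psi k a' < psi k a :=
        hmono (Set.mem_Iic.2 ha'.le) (Set.mem_Iic.2 le_rfl) ha'
      exact (opow_lt_opow_iff_right one_lt_omega0).2
        ((add_lt_add_iff_left ω).2 (msub_lt_msub h2 hψ))
  rw [psi_of_isNF hk ha'pos hnf]
  exact hadd (hadd hhead (omega0_mul_lt_omega0_opow he hb)) ((natCast_lt_omega0 l).trans_le hω)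

theorem psi_lt_psi_succ (hk : 2 ≤ k) {n : ℕ} (hmono : StrictMonoOn (psi.{u} k) (Set.Iic n)) :
    psi.{u} k n < psi k (n + 1) := by
  rcases lt_or_ge (n + 1) k with hnk | hkn
  · rw [psi_of_lt hnk, psi_of_lt (by omega : n < k)]
    exact_mod_cast n.lt_succ_self
  obtain ⟨a, b, l, hnf⟩ := exists_isNF hk n.succ_pos
  have ha := hnf.one_le_level hkn
  have hk0 : k ≠ 0 := by omega
  rw [psi_of_isNF hk ha hnf]
  rcases l with _ | l
  · rcases b with _ | b
    · have hn : n + 1 = A a k 0 := by simpa using hnf.1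
      rw [psi_zero hk0, mul_zero, add_zero, Nat.cast_zero, add_zero, psiHead]
      split_ifs with ha1
      · subst ha1
        rw [A_one_zero] at hn
        rw [psi_of_lt (by omega : n < k)]
        exact natCast_lt_omega0 n
      · have han : a ≤ n := by have := lt_A_zero_right hk a; omega
        exact psi_lt_of_lt_A_zero hk (hmono.mono (Set.Iic_subset_Iic.2 han)) (by omega)
    · have hb : b + 1 ≤ n := by have := lt_A hk0 a (b + 1); have := hnf.1; omega
      have hψb := hmono (Set.mem_Iic.2 (by omega)) (Set.mem_Iic.2 hb) b.lt_succ_self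
      rw [psi_of_isNF hk ha (hnf.pred_of_remainder_zero hk0), Nat.cast_zero, add_zero, add_assoc]
      exact (add_lt_add_iff_left _).2 (omega0_mul_add_lt hψb _)
  · rw [psi_of_isNF hk ha (hnf.pred hk0)]
    exact (add_lt_add_iff_left _).2 (by exact_mod_cast l.lt_succ_self)

theorem psi_strictMono (hk : 2 ≤ k) : StrictMono (psi k) := by
  have hmono (n : ℕ) : StrictMonoOn (psi k) (Set.Iic n) := by
    induction n using Nat.strong_induction_on with
    | _ n ih => exact strictMonoOn_Iic_of_lt_succ fun m hm ↦ psi_lt_psi_succ hk (ih m hm)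
  exact fun m n hmn ↦ hmono n (Set.mem_Iic.2 hmn.le) (Set.mem_Iic.2 le_rfl) hmn

end Monotonicity

/-- For `m > 0`, `ψ_k(m-1) < ψ_k(m)`. -/
theorem psi_strict_mono (k m : ℕ) (o o' : Ordinal) (hk : 3 ≤ k) (hm : 0 < m)
    (h' : Psi k (m - 1) o') (h : Psi k m o) : o' < o := by
  rw [← h'.psi_eq (by omega), ← h.psi_eq (by omega)]
  exact psi_strictMono (by omega) (by omega)
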